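/- The first-order Sobol' index of a variable Z_j for the multilinear model, under independent Uniform[0,1] inputs, equals (1/12)(φ^B_j)², where φ^B_j is the Banzhaf power index of criterion j. -/

import Mathlib

open Finset MeasureTheory

/-- The multilinear model of a capacity. -/
def FML {m : ℕ} (μ : Finset (Fin m) → ℝ) (v : Fin m → ℝ) : ℝ :=
  ∑ A : Finset (Fin m), μ A * (∏ j ∈ A, v j) * (∏ j ∈ Aᶜ, (1 - v j))

/-- A capacity: normalized monotone set function. -/
def IsCapacity {m : ℕ} (μ : Finset (Fin m) → ℝ) : Prop :=
  μ ∅ = 0 ∧ μ univ = 1 ∧ ∀ A B : Finset (Fin m), A ⊆ B → μ A ≤ μ B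

/-- The Banzhaf power index of criterion `j`. -/
noncomputable def banzhafPower {m : ℕ} (μ : Finset (Fin m) → ℝ) (j : Fin m) : ℝ :=
  (1 / 2 ^ (m - 1)) * ∑ D ∈ ({j}ᶜ : Finset (Fin m)).powerset, (μ (D ∪ {j}) - μ D)

/-- The joint law of `m` independent Uniform[0,1] random variables. -/
noncomputable def unifPi (m : ℕ) : Measure (Fin m → ℝ) :=
  Measure.pi fun _ => volume.restrict (Set.Icc (0 : ℝ) 1)

/-- Conditional expectation of `f` given the coordinates in `D` (for independent
Uniform[0,1] inputs): integrate out the remaining coordinates. -/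
noncomputable def condE {m : ℕ} (D : Finset (Fin m)) (f : (Fin m → ℝ) → ℝ)
    (v : Fin m → ℝ) : ℝ :=
  ∫ w, f (fun j => if j ∈ D then v j else w j) ∂(unifPi m)

/-- Variance with respect to the uniform product law. -/
noncomputable def varUnif {m : ℕ} (g : (Fin m → ℝ) → ℝ) : ℝ :=
  ∫ v, (g v - ∫ w, g w ∂(unifPi m)) ^ 2 ∂(unifPi m)

/-!
Integrating out a coordinate of the multilinear model replaces it by its mean `1/2`, so
`E[F_ML | Z_j]` is the multilinear extension evaluated at `Z_j` and `1/2` elsewhere. There every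
coalition not containing `j` gets the same weight `2^{-(m-1)}`, so `E[F_ML | Z_j] = c + φ^B_j Z_j`:
the slope in `Z_j` is exactly the Banzhaf index. The variance of `c + b Z` for `Z` uniform on
`[0, 1]` is `b² / 12`.
-/

instance : IsProbabilityMeasure (volume.restrict (Set.Icc (0 : ℝ) 1)) :=
  ⟨by simp [Real.volume_Icc]⟩

instance (m : ℕ) : IsProbabilityMeasure (unifPi m) := by
  unfold unifPi
  infer_instance

lemma integral_Icc_zero_one_id : ∫ x in Set.Icc (0 : ℝ) 1, x = 1 / 2 := by
  rw [integral_Icc_eq_integral_Ioc, ← intervalIntegral.integral_of_le zero_le_one]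
  norm_num [integral_id]

lemma integral_Icc_zero_one_one_sub : ∫ x in Set.Icc (0 : ℝ) 1, (1 - x) = 1 / 2 := by
  rw [integral_Icc_eq_integral_Ioc, ← intervalIntegral.integral_of_le zero_le_one,
    intervalIntegral.integral_comp_sub_left (fun x => x)]
  norm_num [integral_id]

lemma integral_Icc_zero_one_sub_half_sq :
    ∫ x in Set.Icc (0 : ℝ) 1, (x - 1 / 2) ^ 2 = 1 / 12 := by
  rw [integral_Icc_eq_integral_Ioc, ← intervalIntegral.integral_of_le zero_le_one,
    intervalIntegral.integral_comp_sub_right (fun x => x ^ 2)]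
  norm_num [integral_pow]

section FreezeCoordinate

variable {ι E : Type*} [Fintype ι] [DecidableEq ι]

lemma prod_apply_update {M : Type*} [CommMonoid M] (f : ι → E → M) (w : ι → E) (j : ι)
    (a : E) :
    ∏ i, f i (Function.update w j a i) = ∏ i, Function.update f j (fun _ => f j a) i (w i) :=
  prod_congr rfl fun i _ => by
    by_cases hi : i = j
    · subst hi; simp
    · simp [hi]

variable [MeasurableSpace E]

lemma integrable_pi_prod_update (ν : ι → Measure E) [∀ i, IsProbabilityMeasure (ν i)]
    {f : ι → E → ℝ} (hf : ∀ i, Integrable (f i) (ν i)) (j : ι) (a : E) :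
    Integrable (fun w => ∏ i, f i (Function.update w j a i)) (Measure.pi ν) := by
  simp_rw [prod_apply_update]
  refine Integrable.fintype_prod fun i => ?_
  by_cases hi : i = j
  · subst hi; simp
  · simpa [hi] using hf i

lemma integral_pi_prod_update (ν : ι → Measure E) [∀ i, IsProbabilityMeasure (ν i)]
    (f : ι → E → ℝ) (j : ι) (a : E) :
    ∫ w, ∏ i, f i (Function.update w j a i) ∂Measure.pi ν
      = f j a * ∏ i ∈ univ.erase j, ∫ x, f i x ∂ν i := by
  simp_rw [prod_apply_update, integral_fintype_prod_eq_prod, ← mul_prod_erase univ _ (mem_univ j)]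
  congr 1
  · simp
  · exact prod_congr rfl fun i hi => by simp [ne_of_mem_erase hi]

end FreezeCoordinate

lemma integral_unifPi_comp_eval {m : ℕ} (j : Fin m) {f : ℝ → ℝ} (hf : Measurable f) :
    ∫ v, f (v j) ∂unifPi m = ∫ x in Set.Icc (0 : ℝ) 1, f x := by
  have heval :=
    measurePreserving_eval (μ := fun _ : Fin m => volume.restrict (Set.Icc (0 : ℝ) 1)) j
  rw [← heval.map_eq, integral_map (measurable_pi_apply j).aemeasurable hf.aestronglyMeasurable]
  rfl

lemma varUnif_comp_eval {m : ℕ} (j : Fin m) {g : ℝ → ℝ} (hg : Measurable g) :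
    varUnif (fun v => g (v j))
      = ∫ x in Set.Icc (0 : ℝ) 1, (g x - ∫ y in Set.Icc (0 : ℝ) 1, g y) ^ 2 := by
  rw [varUnif, integral_unifPi_comp_eval j hg,
    integral_unifPi_comp_eval j (f := fun x => (g x - _) ^ 2) (by fun_prop)]

lemma varUnif_affine_eval {m : ℕ} (j : Fin m) (c b : ℝ) :
    varUnif (fun v => c + b * v j) = b ^ 2 / 12 := by
  have hlin : Integrable (fun y => b * y) (volume.restrict (Set.Icc (0 : ℝ) 1)) :=
    (continuous_const.mul continuous_id).integrableOn_Icc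
  have hmean : ∫ y in Set.Icc (0 : ℝ) 1, (c + b * y) = c + b / 2 := by
    rw [integral_add (integrable_const c) hlin, integral_const, probReal_univ, one_smul,
      integral_const_mul, integral_Icc_zero_one_id]
    ring
  have hcentered : ∀ x : ℝ, (c + b * x - (c + b / 2)) ^ 2 = b ^ 2 * (x - 1 / 2) ^ 2 :=
    fun x => by ring
  rw [varUnif_comp_eval j (g := fun x => c + b * x) (by fun_prop), hmean]
  simp_rw [hcentered]
  rw [integral_const_mul, integral_Icc_zero_one_sub_half_sq]
  ring

lemma FML_eq_sum_prod {m : ℕ} (μ : Finset (Fin m) → ℝ) (v : Fin m → ℝ) :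
    FML μ v = ∑ A, μ A * ∏ i, (if i ∈ A then v i else 1 - v i) := by
  refine sum_congr rfl fun A _ => ?_
  rw [mul_assoc, prod_ite, filter_mem_eq_inter, univ_inter, filter_not, filter_mem_eq_inter,
    univ_inter, compl_eq_univ_sdiff]

lemma condE_singleton_FML {m : ℕ} (μ : Finset (Fin m) → ℝ) (j : Fin m) (v : Fin m → ℝ) :
    condE {j} (FML μ) v
      = (1 / 2) ^ (m - 1) * ∑ A, μ A * (if j ∈ A then v j else 1 - v j) := by
  have hfreeze : ∀ w : Fin m → ℝ,
      (fun i => if i ∈ ({j} : Finset (Fin m)) then v i else w i) = Function.update w j (v j) :=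
    fun w => funext fun i => by
      by_cases hi : i = j
      · subst hi; simp
      · simp [hi]
  have hfactor : ∀ A : Finset (Fin m), ∀ i ∈ univ.erase j,
      ∫ x in Set.Icc (0 : ℝ) 1, (if i ∈ A then x else 1 - x) = 1 / 2 := fun A i _ => by
    split_ifs
    exacts [integral_Icc_zero_one_id, integral_Icc_zero_one_one_sub]
  have hintegrable : ∀ A : Finset (Fin m), Integrable (fun w => μ A * ∏ i,
      (if i ∈ A then Function.update w j (v j) i else 1 - Function.update w j (v j) i))
      (unifPi m) := fun A => by
    refine (integrable_pi_prod_update _ (f := fun i t => if i ∈ A then t else 1 - t)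
      (fun i => ?_) j (v j)).const_mul (μ A)
    exact ((continuous_id (X := ℝ)).if_const _
      (continuous_const.sub continuous_id)).integrableOn_Icc
  simp only [condE, FML_eq_sum_prod, hfreeze]
  rw [integral_finsetSum _ fun A _ => hintegrable A, mul_sum]
  refine sum_congr rfl fun A _ => ?_
  rw [integral_const_mul, unifPi,
    integral_pi_prod_update _ (fun i (t : ℝ) => if i ∈ A then t else 1 - t),
    prod_congr rfl (hfactor A), prod_const, card_erase_of_mem (mem_univ j), card_univ,
    Fintype.card_fin]
  ring

lemma condE_singleton_FML_eq_affine {m : ℕ} (μ : Finset (Fin m) → ℝ) (j : Fin m) :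
    condE {j} (FML μ)
      = fun v => (1 / 2) ^ (m - 1) * ∑ D ∈ ({j}ᶜ : Finset (Fin m)).powerset, μ D
          + banzhafPower μ j * v j := by
  funext v
  set P := ({j}ᶜ : Finset (Fin m)).powerset
  have hout : ∑ D ∈ P, μ D * (if j ∈ D then v j else 1 - v j)
      = (∑ D ∈ P, μ D) * (1 - v j) := by
    rw [sum_mul]
    exact sum_congr rfl fun D hD => by
      rw [if_neg (subset_compl_singleton.1 (mem_powerset.1 hD))]
  have hin : ∑ D ∈ P, μ (insert j D) * (if j ∈ insert j D then v j else 1 - v j)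
      = (∑ D ∈ P, μ (insert j D)) * v j := by
    simp only [mem_insert_self, if_true, sum_mul]
  rw [condE_singleton_FML, ← powerset_univ, ← insert_compl_self j,
    sum_powerset_insert (notMem_compl.2 (mem_singleton_self j)), hout, hin, banzhafPower]
  simp only [union_singleton, one_div_pow, sum_sub_distrib]
  ring

theorem first_order_sobol_multilinear_general {m : ℕ} (μ : Finset (Fin m) → ℝ) (j : Fin m) :
    varUnif (condE {j} (FML μ)) = (1 / 12) * (banzhafPower μ j) ^ 2 := by
  rw [condE_singleton_FML_eq_affine, varUnif_affine_eval]
  ring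

/-- The first-order Sobol' index of variable `Z_j` for the multilinear model equals
`(1/12) (φ^B_j)²`. -/
theorem first_order_sobol_multilinear {m : ℕ} (μ : Finset (Fin m) → ℝ)
    (hμ : IsCapacity μ) (j : Fin m) :
    varUnif (condE {j} (FML μ)) = (1 / 12) * (banzhafPower μ j) ^ 2 :=
  first_order_sobol_multilinear_general μ j
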